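/- arXiv:2402.16396 — 3 statements merged into one kernel-verified Lean document; each statement's English description precedes it below -/
import Mathlib

section
/- Let S be a step-reinforced random walk in ℝ with parameter α ≤ 1/2 and step distribution μ satisfying EX₁² < ∞ and EX₁ = 0. If additionally liminf Sₙ = −∞ and limsup Sₙ = +∞ almost surely, then for any ε > 0, almost surely |Sₙ| ≤ ε√n holds for infinitely many n. -/
open MeasureTheory ProbabilityTheory Filter
open scoped ENNReal Topology

noncomputable section

/-- The natural filtration generated by the steps `X 1, …, X n`. -/
def srrwFiltration {Ω E : Type*} [MeasurableSpace Ω] [MeasurableSpace E]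
    (X : ℕ → Ω → E) (n : ℕ) : MeasurableSpace Ω :=
  ⨆ i ∈ Finset.Icc 1 n, MeasurableSpace.comap (X i) inferInstance

/-- A step-reinforced random walk with reinforcement parameter `α` and step
distribution `μ`: `X 1 ∼ μ`, and given the first `n` steps, the conditional law of
`X (n+1)` is `α · (empirical measure of X 1, …, X n) + (1-α) · μ`. -/
structure IsSRRW {Ω E : Type*} [MeasurableSpace Ω] [MeasurableSpace E]
    (P : Measure Ω) (α : ℝ) (μ : Measure E) (X : ℕ → Ω → E) : Prop where
  probP : IsProbabilityMeasure P
  probμ : IsProbabilityMeasure μ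
  alpha_nonneg : 0 ≤ α
  alpha_lt_one : α < 1
  meas : ∀ n, Measurable (X n)
  law_one : P.map (X 1) = μ
  cond : ∀ n : ℕ, 1 ≤ n → ∀ A : Set E, MeasurableSet A →
    (P[(fun ω => A.indicator (fun _ => (1:ℝ)) (X (n+1) ω)) | srrwFiltration X n])
      =ᵐ[P] fun ω =>
        (α / n) * ∑ i ∈ Finset.Icc 1 n, A.indicator (fun _ => (1:ℝ)) (X i ω)
        + (1 - α) * (μ A).toReal

/-- Position of the walk: `S n = X 1 + ⋯ + X n`, `S 0 = 0`. -/
def srrwSum {Ω E : Type*} [AddCommMonoid E] (X : ℕ → Ω → E) (n : ℕ) (ω : Ω) : E :=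
  ∑ i ∈ Finset.Icc 1 n, X i ω

/-- Each step of an SRRW has marginal law `μ`. -/
lemma srrw_law {Ω : Type*} [MeasurableSpace Ω]
    (P : Measure Ω) (α : ℝ) (μ : Measure ℝ) (X : ℕ → Ω → ℝ)
    (hsrrw : IsSRRW P α μ X) : ∀ n, 1 ≤ n → P.map (X n) = μ := by
  haveI := hsrrw.probP
  haveI := hsrrw.probμ
  intro n
  induction n using Nat.strong_induction_on with
  | _ n ih =>
    intro hn
    match n, hn with
    | 1, _ => exact hsrrw.law_one
    | (m+2), _ =>
      set m' := m + 1 with hm'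
      have hm1 : 1 ≤ m' := by omega
      have hle : srrwFiltration X m' ≤ ‹MeasurableSpace Ω› :=
        iSup₂_le fun i _ => (hsrrw.meas i).comap_le
      ext A hA
      rw [Measure.map_apply (hsrrw.meas _) hA]
      -- integral of the indicator of X (m'+1) ∈ A
      have hind : ∀ j : ℕ, (fun ω => A.indicator (fun _ => (1:ℝ)) (X j ω))
          = (X j ⁻¹' A).indicator (fun _ => (1:ℝ)) := by
        intro j; funext ω
        by_cases h : X j ω ∈ A <;> simp [Set.indicator_apply, h]
      have hint : ∀ j : ℕ, Integrable (fun ω => A.indicator (fun _ => (1:ℝ)) (X j ω)) P := by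
        intro j; rw [hind j]
        exact (integrable_const (1:ℝ)).indicator ((hsrrw.meas j) hA)
      have hgen : ∀ j : ℕ, ∫ ω, A.indicator (fun _ => (1:ℝ)) (X j ω) ∂P
          = (P (X j ⁻¹' A)).toReal := by
        intro j; rw [hind j]; exact integral_indicator_one ((hsrrw.meas j) hA)
      have hIj : ∀ j, 1 ≤ j → j ≤ m' →
          ∫ ω, A.indicator (fun _ => (1:ℝ)) (X j ω) ∂P = (μ A).toReal := by
        intro j hj1 hj2
        rw [hgen j, ← Measure.map_apply (hsrrw.meas j) hA, ih j (by omega) hj1]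
      have hL : ∫ ω, A.indicator (fun _ => (1:ℝ)) (X (m'+1) ω) ∂P
          = (P (X (m'+1) ⁻¹' A)).toReal := hgen (m'+1)
      -- integrate the conditional expectation identity
      have hcond := hsrrw.cond m' hm1 A hA
      have hkey : ∫ ω, A.indicator (fun _ => (1:ℝ)) (X (m'+1) ω) ∂P
          = ∫ ω, ((α / m') * ∑ i ∈ Finset.Icc 1 m', A.indicator (fun _ => (1:ℝ)) (X i ω)
              + (1 - α) * (μ A).toReal) ∂P := by
        rw [← integral_condExp hle, integral_congr_ae hcond]
      have hR : ∫ ω, ((α / m') * ∑ i ∈ Finset.Icc 1 m', A.indicator (fun _ => (1:ℝ)) (X i ω)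
              + (1 - α) * (μ A).toReal) ∂P = (μ A).toReal := by
        have hintsum : Integrable
            (fun ω => ∑ i ∈ Finset.Icc 1 m', A.indicator (fun _ => (1:ℝ)) (X i ω)) P :=
          integrable_finset_sum _ fun i _ => hint i
        rw [integral_add (hintsum.const_mul _) (integrable_const _), integral_const_mul,
          integral_finset_sum _ fun i _ => hint i]
        have : ∑ i ∈ Finset.Icc 1 m', ∫ ω, A.indicator (fun _ => (1:ℝ)) (X i ω) ∂P
            = (m' : ℝ) * (μ A).toReal := by
          rw [Finset.sum_congr rfl fun i hi => by
            rw [hIj i (Finset.mem_Icc.mp hi).1 (Finset.mem_Icc.mp hi).2]]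
          simp [Nat.card_Icc]
        rw [this, integral_const, probReal_univ]
        have hm0 : (m' : ℝ) ≠ 0 := by positivity
        field_simp
        ring
      have := hL.symm.trans (hkey.trans hR)
      exact (ENNReal.toReal_eq_toReal_iff' (measure_ne_top P _) (measure_ne_top μ _)).mp this

/-- Borel–Cantelli: a.s. eventually `|X k| ≤ ε √k`. -/
lemma srrw_step_small {Ω : Type*} [MeasurableSpace Ω]
    (P : Measure Ω) (μ : Measure ℝ) (X : ℕ → Ω → ℝ)
    [IsProbabilityMeasure P] [IsProbabilityMeasure μ]
    (hmeas : ∀ n, Measurable (X n))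
    (hlaw : ∀ n, 1 ≤ n → P.map (X n) = μ)
    (hmom : Integrable (fun x : ℝ => x ^ 2) μ)
    {ε : ℝ} (hε : 0 < ε) :
    ∀ᵐ ω ∂P, ∀ᶠ k in atTop, |X k ω| ≤ ε * Real.sqrt k := by
  set t : ℕ → Set ℝ := fun k => {x : ℝ | ε * Real.sqrt k < |x|} with ht
  have htm : ∀ k, MeasurableSet (t k) := fun k =>
    measurableSet_lt measurable_const measurable_abs
  set s : ℕ → Set Ω := fun k => X (k+1) ⁻¹' (t (k+1)) with hs
  -- the tail sum is finite by a layer-cake bound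
  have hsum : (∑' k : ℕ, μ (t (k+1))) ≠ ∞ := by
    have hlayer : (∑' k : ℕ, μ (t (k+1)))
        ≤ ∫⁻ x, ENNReal.ofReal (x ^ 2 / ε ^ 2 + 1) ∂μ := by
      calc (∑' k : ℕ, μ (t (k+1)))
          = ∑' k : ℕ, ∫⁻ x, (t (k+1)).indicator 1 x ∂μ := by
            simp_rw [lintegral_indicator_one (htm _)]
        _ = ∫⁻ x, ∑' k : ℕ, (t (k+1)).indicator 1 x ∂μ :=
            (lintegral_tsum fun k => ((measurable_one.indicator (htm (k+1))).aemeasurable)).symm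
        _ ≤ ∫⁻ x, ENNReal.ofReal (x ^ 2 / ε ^ 2 + 1) ∂μ := by
            refine lintegral_mono fun x => ?_
            set m : ℕ := ⌈x ^ 2 / ε ^ 2⌉₊ with hm
            have hpt : ∀ k : ℕ, (t (k+1)).indicator (1 : ℝ → ℝ≥0∞) x
                ≤ if k < m then 1 else 0 := by
              intro k
              by_cases hx : x ∈ t (k+1)
              · have h1 : ε * Real.sqrt ((k:ℝ)+1) < |x| := by
                  have h := hx
                  simp only [ht, Set.mem_setOf_eq] at h
                  push_cast at h
                  exact h
                have h2 : ((k:ℝ)+1) < x ^ 2 / ε ^ 2 := by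
                  have hsq : (ε * Real.sqrt (k+1)) ^ 2 < |x| ^ 2 := by
                    apply sq_lt_sq' _ h1
                    nlinarith [Real.sqrt_nonneg ((k:ℝ)+1), abs_nonneg x, h1]
                  rw [mul_pow, Real.sq_sqrt (by positivity)] at hsq
                  rw [lt_div_iff₀ (by positivity)]
                  rw [sq_abs] at hsq
                  linarith
                have hk : k < m := by
                  have : ((k:ℝ)) < x ^ 2 / ε ^ 2 := by linarith
                  exact lt_of_lt_of_le (Nat.lt_ceil.mpr this) le_rfl
                simp [Set.indicator_of_mem hx, hk]
              · simp [Set.indicator_of_notMem hx]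
            calc (∑' k : ℕ, (t (k+1)).indicator (1 : ℝ → ℝ≥0∞) x)
                ≤ ∑' k : ℕ, (if k < m then (1:ℝ≥0∞) else 0) := ENNReal.tsum_le_tsum hpt
              _ = (m : ℝ≥0∞) := by
                  rw [tsum_eq_sum (s := Finset.range m)
                    (by intro k hk; simp only [Finset.mem_range] at hk; simp [hk])]
                  rw [Finset.sum_congr rfl fun k hk => if_pos (Finset.mem_range.mp hk)]
                  simp
              _ ≤ ENNReal.ofReal (x ^ 2 / ε ^ 2 + 1) := by
                  have h0 : (0:ℝ) ≤ x ^ 2 / ε ^ 2 := by positivity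
                  have := (Nat.ceil_lt_add_one h0).le
                  calc (m : ℝ≥0∞) = ENNReal.ofReal (m : ℝ) := by
                        simp
                    _ ≤ ENNReal.ofReal (x ^ 2 / ε ^ 2 + 1) := ENNReal.ofReal_le_ofReal this
    have hfin : ∫⁻ x, ENNReal.ofReal (x ^ 2 / ε ^ 2 + 1) ∂μ < ∞ := by
      have heq : ∀ x : ℝ, ENNReal.ofReal (x ^ 2 / ε ^ 2 + 1)
          = ENNReal.ofReal (x ^ 2) * ENNReal.ofReal (ε ^ 2)⁻¹ + 1 := by
        intro x
        rw [ENNReal.ofReal_add (by positivity) zero_le_one, div_eq_mul_inv,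
          ENNReal.ofReal_mul (by positivity), ENNReal.ofReal_one]
      simp_rw [heq]
      rw [lintegral_add_right _ measurable_const,
        lintegral_mul_const _ (by fun_prop)]
      have hx2 : ∫⁻ x, ENNReal.ofReal (x ^ 2) ∂μ < ∞ := by
        have h2 := hmom.hasFiniteIntegral
        rw [hasFiniteIntegral_iff_norm] at h2
        refine lt_of_eq_of_lt ?_ h2
        refine lintegral_congr fun x => ?_
        rw [Real.norm_eq_abs, abs_of_nonneg (by positivity)]
      simp only [lintegral_const, measure_univ, mul_one]
      exact ENNReal.add_lt_top.mpr
        ⟨ENNReal.mul_lt_top hx2 ENNReal.ofReal_lt_top, ENNReal.one_lt_top⟩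
    exact (lt_of_le_of_lt hlayer hfin).ne
  have hPs : ∀ k : ℕ, P (s k) = μ (t (k+1)) := by
    intro k
    rw [hs, ← Measure.map_apply (hmeas (k+1)) (htm (k+1)), hlaw (k+1) (by omega)]
  have hsum' : (∑' k : ℕ, P (s k)) ≠ ∞ := by simp_rw [hPs]; exact hsum
  filter_upwards [ae_eventually_notMem hsum'] with ω hω
  rw [eventually_atTop] at hω ⊢
  obtain ⟨N, hN⟩ := hω
  refine ⟨N + 1, fun k hk => ?_⟩
  have := hN (k - 1) (by omega)
  have hk1 : k - 1 + 1 = k := by omega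
  rw [hs] at this
  simp only [Set.mem_preimage, hk1] at this
  have : ¬ (ε * Real.sqrt k < |X k ω|) := this
  linarith [not_lt.mp this]

lemma srrwSum_succ {Ω : Type*} (X : ℕ → Ω → ℝ) (n : ℕ) (ω : Ω) :
    srrwSum X (n+1) ω = srrwSum X n ω + X (n+1) ω := by
  rw [srrwSum, srrwSum, Finset.sum_Icc_succ_top (by omega)]

theorem stmt11 {Ω : Type*} [MeasurableSpace Ω]
    (P : Measure Ω) (α : ℝ) (μ : Measure ℝ) (X : ℕ → Ω → ℝ)
    (hsrrw : IsSRRW P α μ X) (hα : α ≤ 1 / 2)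
    (hmom : Integrable (fun x : ℝ => x ^ 2) μ)
    (hmean : ∫ x, x ∂μ = 0)
    (hosc : ∀ᵐ ω ∂P, ∀ M : ℝ,
      (∃ᶠ n in atTop, srrwSum X n ω ≤ -M) ∧ (∃ᶠ n in atTop, M ≤ srrwSum X n ω)) :
    ∀ ε : ℝ, 0 < ε →
      ∀ᵐ ω ∂P, ∃ᶠ n in atTop, |srrwSum X n ω| ≤ ε * Real.sqrt n := by
  intro ε hε
  haveI := hsrrw.probP
  haveI := hsrrw.probμ
  have hlaw := srrw_law P α μ X hsrrw
  have hsmall := srrw_step_small P μ X hsrrw.meas hlaw hmom hε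
  filter_upwards [hosc, hsmall] with ω hoω hsω
  rw [frequently_atTop]
  intro N
  obtain ⟨K, hK⟩ := eventually_atTop.mp hsω
  obtain ⟨n₁, hn₁, hS1⟩ := frequently_atTop.mp (hoω 0).1 (max N K)
  obtain ⟨n₂, hn₂, hS2⟩ := frequently_atTop.mp (hoω 0).2 (n₁ + 1)
  rw [neg_zero] at hS1
  have hex : ∃ m, n₁ < m ∧ 0 ≤ srrwSum X m ω := ⟨n₂, by omega, hS2⟩
  set k := Nat.find hex with hkdef
  obtain ⟨hk1, hk2⟩ := Nat.find_spec hex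
  have hprev : srrwSum X (k - 1) ω ≤ 0 := by
    rcases eq_or_lt_of_le (by omega : n₁ ≤ k - 1) with h | h
    · rw [← h]; exact hS1
    · have := Nat.find_min hex (show k - 1 < k by omega)
      push_neg at this
      exact (this h).le
  have hkpos : 1 ≤ k := by omega
  have hstep : srrwSum X k ω = srrwSum X (k-1) ω + X k ω := by
    have h : k - 1 + 1 = k := by omega
    have := srrwSum_succ X (k-1) ω
    rwa [h] at this
  have hNn : N ≤ n₁ := le_trans (le_max_left N K) hn₁
  have hKn : K ≤ n₁ := le_trans (le_max_right N K) hn₁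
  have hXk : |X k ω| ≤ ε * Real.sqrt k := hK k (by omega)
  refine ⟨k, by omega, ?_⟩
  rw [abs_of_nonneg hk2]
  calc srrwSum X k ω ≤ X k ω := by rw [hstep]; linarith
    _ ≤ |X k ω| := le_abs_self _
    _ ≤ ε * Real.sqrt k := hXk

end
end

section
/- Let S be a step-reinforced random walk in ℝ^d with parameter α ∈ [0,1) and step distribution μ ≠ δ₀. Then for any R > 0, the exit time ζ_R = inf{n ∈ ℕ : ‖Sₙ‖ ≥ R} has finite expectation. -/
open MeasureTheory ProbabilityTheory Filter
open scoped ENNReal Topology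

noncomputable section

section Aux

variable {Ω E : Type*} [MeasurableSpace Ω] [MeasurableSpace E] {X : ℕ → Ω → E}

lemma srrwFiltration_le (hX : ∀ n, Measurable (X n)) (n : ℕ) :
    srrwFiltration X n ≤ ‹MeasurableSpace Ω› := by
  refine iSup_le fun i => iSup_le fun _ => ?_
  exact (hX i).comap_le

lemma srrwFiltration_mono {m n : ℕ} (h : m ≤ n) :
    srrwFiltration X m ≤ srrwFiltration X n := by
  refine iSup_le fun i => iSup_le fun hi => ?_
  refine le_iSup_of_le i (le_iSup_of_le ?_ le_rfl)
  simp only [Finset.mem_Icc] at hi ⊢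
  omega

lemma measurableSet_filtration {i n : ℕ} (h1 : 1 ≤ i) (h2 : i ≤ n)
    {A : Set E} (hA : MeasurableSet A) :
    MeasurableSet[srrwFiltration X n] (X i ⁻¹' A) := by
  have : MeasurableSpace.comap (X i) inferInstance ≤ srrwFiltration X n := by
    refine le_iSup_of_le i (le_iSup_of_le ?_ le_rfl)
    simp [Finset.mem_Icc, h1, h2]
  exact this _ ⟨A, hA, rfl⟩

lemma srrw_step {P : Measure Ω} {α : ℝ} {μ : Measure E}
    (h : IsSRRW P α μ X) (n : ℕ) (hn : 1 ≤ n) {A : Set E} (hA : MeasurableSet A)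
    {B : Set Ω} (hB : MeasurableSet[srrwFiltration X n] B) :
    ENNReal.ofReal ((1 - α) * (μ A).toReal) * P B ≤ P (B ∩ X (n+1) ⁻¹' A) := by
  haveI := h.probP
  set c : ℝ := (1 - α) * (μ A).toReal with hc
  have hc0 : 0 ≤ c := mul_nonneg (by linarith [h.alpha_lt_one]) ENNReal.toReal_nonneg
  have hm := srrwFiltration_le h.meas n
  have hBm : MeasurableSet B := hm _ hB
  have hSA : MeasurableSet (X (n+1) ⁻¹' A) := (h.meas (n+1)) hA
  set f : Ω → ℝ := fun ω => A.indicator (fun _ => (1:ℝ)) (X (n+1) ω) with hf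
  have hfind : f = (X (n+1) ⁻¹' A).indicator (fun _ => (1:ℝ)) := by
    ext ω; by_cases hω : X (n+1) ω ∈ A <;> simp [hf, Set.indicator, hω]
  have hfint : Integrable f P := by
    rw [hfind]; exact (integrable_const (1:ℝ)).indicator hSA
  have h1 : ∫ ω in B, f ω ∂P = (P (B ∩ X (n+1) ⁻¹' A)).toReal := by
    rw [hfind, setIntegral_indicator hSA]
    simp [Measure.restrict_apply' hBm, Set.inter_comm]
    rfl
  have h2 : ∫ ω in B, (P[f|srrwFiltration X n]) ω ∂P = ∫ ω in B, f ω ∂P :=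
    setIntegral_condExp hm hfint hB
  have h3 : ∀ᵐ ω ∂P, c ≤ (P[f|srrwFiltration X n]) ω := by
    filter_upwards [h.cond n hn A hA] with ω hω
    rw [hω]
    have : 0 ≤ (α / n) * ∑ i ∈ Finset.Icc 1 n, A.indicator (fun _ => (1:ℝ)) (X i ω) := by
      apply mul_nonneg (div_nonneg h.alpha_nonneg (Nat.cast_nonneg n))
      apply Finset.sum_nonneg
      intro i _
      exact Set.indicator_nonneg (fun _ _ => zero_le_one) _
    linarith
  have h4 : (c : ℝ) * (P B).toReal ≤ ∫ ω in B, (P[f|srrwFiltration X n]) ω ∂P := by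
    have hint1 : IntegrableOn (fun _ => c) B P :=
      integrableOn_const (measure_ne_top P B)
    have hle := setIntegral_mono_ae hint1
      (integrable_condExp.integrableOn : IntegrableOn (P[f|srrwFiltration X n]) B P)
      (h3 : (fun _ => c) ≤ᵐ[P] _)
    calc (c : ℝ) * (P B).toReal = ∫ _ in B, c ∂P := by
          rw [setIntegral_const, smul_eq_mul, mul_comm]; rfl
      _ ≤ _ := hle
  have h5 : c * (P B).toReal ≤ (P (B ∩ X (n+1) ⁻¹' A)).toReal := by
    rw [← h1, ← h2]; exact h4
  calc ENNReal.ofReal c * P B = ENNReal.ofReal (c * (P B).toReal) := by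
        rw [ENNReal.ofReal_mul hc0, ENNReal.ofReal_toReal (measure_ne_top P B)]
    _ ≤ ENNReal.ofReal ((P (B ∩ X (n+1) ⁻¹' A)).toReal) := ENNReal.ofReal_le_ofReal h5
    _ = P (B ∩ X (n+1) ⁻¹' A) := ENNReal.ofReal_toReal (measure_ne_top P _)

lemma srrw_chain {P : Measure Ω} {α : ℝ} {μ : Measure E}
    (h : IsSRRW P α μ X) {A : Set E} (hA : MeasurableSet A)
    (j : ℕ) (hj : 1 ≤ j) (l : ℕ) {B : Set Ω} (hB : MeasurableSet[srrwFiltration X j] B) :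
    (ENNReal.ofReal ((1 - α) * (μ A).toReal)) ^ l * P B
      ≤ P (B ∩ ⋂ i ∈ Finset.Icc (j+1) (j+l), X i ⁻¹' A) := by
  set q := ENNReal.ofReal ((1 - α) * (μ A).toReal) with hq
  induction l with
  | zero => simp
  | succ l ih =>
    have hD : MeasurableSet[srrwFiltration X (j+l)]
        (B ∩ ⋂ i ∈ Finset.Icc (j+1) (j+l), X i ⁻¹' A) := by
      refine MeasurableSet.inter (srrwFiltration_mono (by omega) _ hB) ?_
      refine Finset.measurableSet_biInter _ fun i hi => ?_
      rw [Finset.mem_Icc] at hi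
      exact measurableSet_filtration (by omega) (by omega) hA
    have hstep := srrw_step h (j+l) (by omega) hA hD
    have hIcc : Finset.Icc (j+1) (j+l+1) = insert (j+l+1) (Finset.Icc (j+1) (j+l)) := by
      exact (Finset.insert_Icc_right_eq_Icc_add_one (by omega)).symm
    calc q ^ (l+1) * P B = q * (q ^ l * P B) := by ring
      _ ≤ q * P (B ∩ ⋂ i ∈ Finset.Icc (j+1) (j+l), X i ⁻¹' A) :=
          mul_le_mul_right ih q
      _ ≤ P ((B ∩ ⋂ i ∈ Finset.Icc (j+1) (j+l), X i ⁻¹' A) ∩ X (j+l+1) ⁻¹' A) := hstep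
      _ = P (B ∩ ⋂ i ∈ Finset.Icc (j+1) (j+l+1), X i ⁻¹' A) := by
          rw [hIcc]
          congr 1
          rw [Finset.set_biInter_insert]
          rw [Set.inter_assoc, Set.inter_comm (X (j+l+1) ⁻¹' A)]

lemma srrw_block_compl {P : Measure Ω} {α : ℝ} {μ : Measure E}
    (h : IsSRRW P α μ X) {A : Set E} (hA : MeasurableSet A)
    (j : ℕ) (hj : 1 ≤ j) (l : ℕ) {B : Set Ω} (hB : MeasurableSet[srrwFiltration X j] B) :
    P (B ∩ (⋂ i ∈ Finset.Icc (j+1) (j+l), X i ⁻¹' A)ᶜ)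
      ≤ (1 - (ENNReal.ofReal ((1 - α) * (μ A).toReal)) ^ l) * P B := by
  haveI := h.probP
  set q := ENNReal.ofReal ((1 - α) * (μ A).toReal) with hq
  set D := ⋂ i ∈ Finset.Icc (j+1) (j+l), X i ⁻¹' A with hD
  have hBm : MeasurableSet B := srrwFiltration_le h.meas j _ hB
  have hDm : MeasurableSet D := by
    exact Finset.measurableSet_biInter _ fun i hi => (h.meas i) hA
  have hsplit : P (B ∩ D) + P (B ∩ Dᶜ) = P B := by
    rw [← measure_inter_add_diff B hDm, Set.diff_eq]
  have hchain := srrw_chain h hA j hj l hB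
  rw [← hD] at hchain
  have hfin : P (B ∩ D) ≠ ⊤ := measure_ne_top P _
  have h1 : P (B ∩ Dᶜ) = P B - P (B ∩ D) := by
    rw [← hsplit, ENNReal.add_sub_cancel_left hfin]
  rw [h1]
  have h2 : (1 - q ^ l) * P B = P B - q ^ l * P B := by
    rw [ENNReal.sub_mul (fun _ _ => measure_ne_top P B), one_mul]
  rw [h2]
  exact tsub_le_tsub le_rfl hchain

end Aux

lemma abs_coord_le_norm {d : ℕ} (x : EuclideanSpace ℝ (Fin d)) (i : Fin d) : |x i| ≤ ‖x‖ := by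
  rw [EuclideanSpace.norm_eq, ← Real.sqrt_sq_eq_abs]
  apply Real.sqrt_le_sqrt
  have := Finset.single_le_sum (f := fun j => ‖x j‖ ^ 2) (fun j _ => sq_nonneg _)
    (Finset.mem_univ i)
  simpa [Real.norm_eq_abs, sq_abs] using this

lemma coord_measurable {d : ℕ} (i : Fin d) :
    Measurable (fun x : EuclideanSpace ℝ (Fin d) => x i) :=
  (EuclideanSpace.proj (𝕜 := ℝ) i).continuous.measurable

lemma exists_coord_set {d : ℕ} (μ : Measure (EuclideanSpace ℝ (Fin d)))
    [IsProbabilityMeasure μ] (hμ : μ ≠ Measure.dirac 0) :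
    ∃ (i : Fin d) (e c : ℝ), (e = 1 ∨ e = -1) ∧ 0 < c ∧
      0 < μ {x | c ≤ e * x i} := by
  have h0 : μ {(0 : EuclideanSpace ℝ (Fin d))}ᶜ ≠ 0 := by
    intro hz
    apply hμ
    refine Measure.ext fun s hs => ?_
    by_cases h0s : (0 : EuclideanSpace ℝ (Fin d)) ∈ s
    · have hcs : μ sᶜ = 0 := by
        refine measure_mono_null (fun x hx => ?_) hz
        intro hx0
        simp only [Set.mem_singleton_iff] at hx0
        exact hx (hx0 ▸ h0s)
      have hsum := measure_add_measure_compl (μ := μ) hs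
      rw [hcs, add_zero] at hsum
      rw [hsum, Measure.dirac_apply' _ hs, Set.indicator_of_mem h0s]
      simp
    · have : μ s = 0 := by
        refine measure_mono_null (fun x hx => ?_) hz
        intro hx0
        simp only [Set.mem_singleton_iff] at hx0
        exact h0s (hx0 ▸ hx)
      rw [this, Measure.dirac_apply' _ hs, Set.indicator_of_notMem h0s]
  by_contra hall
  push_neg at hall
  apply h0
  have hcover : {(0 : EuclideanSpace ℝ (Fin d))}ᶜ ⊆
      ⋃ (p : Fin d × Bool × ℕ),
        {x : EuclideanSpace ℝ (Fin d) |
          1 / (p.2.2 + 1 : ℝ) ≤ (if p.2.1 then (1:ℝ) else -1) * x p.1} := by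
    intro x hx
    have hx0 : x ≠ 0 := by simpa using hx
    have : ∃ i, x i ≠ 0 := by
      by_contra hc
      push_neg at hc
      exact hx0 (by ext j; simpa using hc j)
    obtain ⟨i, hi⟩ := this
    have habs : 0 < |x i| := abs_pos.2 hi
    obtain ⟨k, hk⟩ := exists_nat_one_div_lt habs
    rcases le_or_gt 0 (x i) with hpos | hneg
    · refine Set.mem_iUnion.2 ⟨⟨i, true, k⟩, ?_⟩
      simp only [Set.mem_setOf_eq, if_true, one_mul]
      rw [abs_of_nonneg hpos] at hk
      linarith
    · refine Set.mem_iUnion.2 ⟨⟨i, false, k⟩, ?_⟩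
      simp only [Set.mem_setOf_eq, Bool.false_eq_true, if_false, neg_one_mul]
      rw [abs_of_neg hneg] at hk
      linarith
  refine measure_mono_null hcover (measure_iUnion_null fun p => ?_)
  have h1 : ((if p.2.1 then (1:ℝ) else -1) = 1 ∨ (if p.2.1 then (1:ℝ) else -1) = -1) := by
    cases p.2.1 <;> simp
  have h2 : (0:ℝ) < 1 / (p.2.2 + 1 : ℝ) := by positivity
  exact le_antisymm (hall p.1 _ _ h1 h2) (zero_le)

theorem stmt12 {Ω : Type*} [MeasurableSpace Ω] {d : ℕ}
    (P : Measure Ω) (α : ℝ) (μ : Measure (EuclideanSpace ℝ (Fin d)))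
    (X : ℕ → Ω → EuclideanSpace ℝ (Fin d))
    (hsrrw : IsSRRW P α μ X)
    (hμ : μ ≠ Measure.dirac 0) :
    ∀ R : ℝ, 0 < R →
      ∫⁻ ω, (⨅ (n : ℕ) (_ : R ≤ ‖srrwSum X n ω‖), (n : ℝ≥0∞)) ∂P < ⊤ := by
  classical
  intro R hR
  haveI := hsrrw.probP
  haveI := hsrrw.probμ
  obtain ⟨i, e, c, he, hc, hApos⟩ := exists_coord_set μ hμ
  set A : Set (EuclideanSpace ℝ (Fin d)) := {x | c ≤ e * x i} with hAdef
  have hA : MeasurableSet A :=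
    measurableSet_le measurable_const (measurable_const.mul (coord_measurable i))
  set q : ℝ≥0∞ := ENNReal.ofReal ((1 - α) * (μ A).toReal) with hqdef
  have hμAfin : μ A ≠ ⊤ := measure_ne_top μ A
  have hq0 : 0 < q := by
    rw [hqdef]
    apply ENNReal.ofReal_pos.2
    exact mul_pos (by linarith [hsrrw.alpha_lt_one])
      (ENNReal.toReal_pos hApos.ne' hμAfin)
  have hq1 : q ≤ 1 := by
    calc q ≤ ENNReal.ofReal ((μ A).toReal) := by
          apply ENNReal.ofReal_le_ofReal
          nlinarith [ENNReal.toReal_nonneg (a := μ A), hsrrw.alpha_nonneg]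
      _ = μ A := ENNReal.ofReal_toReal hμAfin
      _ ≤ 1 := prob_le_one
  set m : ℕ := ⌈(2 * R) / c⌉₊ + 1 with hmdef
  have hmc : 2 * R ≤ (m : ℝ) * c := by
    have h1 : (2 * R) / c ≤ (m : ℝ) := by
      refine le_trans (Nat.le_ceil _) ?_
      exact_mod_cast Nat.le_succ _
    calc 2 * R = ((2 * R) / c) * c := by field_simp
      _ ≤ (m : ℝ) * c := by nlinarith
  -- the block events
  set D : ℕ → Set Ω := fun j => ⋂ t ∈ Finset.Icc (j+1) (j+m), X t ⁻¹' A with hDdef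
  set Ek : ℕ → Set Ω := fun k => D (1 + k * m) with hEdef
  set Ck : ℕ → Set Ω := fun k => ⋂ j ∈ Finset.range (k+1), (Ek j)ᶜ with hCdef
  set r : ℝ≥0∞ := 1 - q ^ m with hrdef
  -- measurability of blocks
  have hDmeasF : ∀ j : ℕ, 1 ≤ j → MeasurableSet[srrwFiltration X (j+m)] (D j) := by
    intro j hj
    refine Finset.measurableSet_biInter _ fun t ht => ?_
    rw [Finset.mem_Icc] at ht
    exact measurableSet_filtration (by omega) (by omega) hA
  have hEmeasF : ∀ k, MeasurableSet[srrwFiltration X (1 + (k+1) * m)] (Ek k) := by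
    intro k
    have harith : 1 + (k+1) * m = (1 + k * m) + m := by ring
    rw [harith]
    exact hDmeasF _ (by omega)
  have hEmeas : ∀ k, MeasurableSet (Ek k) := fun k =>
    srrwFiltration_le hsrrw.meas _ _ (hEmeasF k)
  have hCmeas : ∀ k, MeasurableSet (Ck k) :=
    fun k => Finset.measurableSet_biInter _ fun j _ => (hEmeas j).compl
  have hCmeasF : ∀ k, MeasurableSet[srrwFiltration X (1 + (k+1) * m)] (Ck k) := by
    intro k
    refine Finset.measurableSet_biInter _ fun j hj => ?_
    rw [Finset.mem_range] at hj
    refine MeasurableSet.compl ?_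
    refine srrwFiltration_mono ?_ _ (hEmeasF j)
    gcongr
    omega
  -- the complement probability bound
  have hEkeq : ∀ k, Ek k =
      ⋂ t ∈ Finset.Icc (1 + k * m + 1) (1 + k * m + m), X t ⁻¹' A := by
    intro k
    simp only [hEdef, hDdef]
  have hPk : ∀ k, P (Ck k) ≤ r ^ (k+1) := by
    intro k
    induction k with
    | zero =>
      have hblock := srrw_block_compl hsrrw hA (1 + 0 * m) (by omega) m
        (B := Set.univ) MeasurableSet.univ
      have hC0 : Ck 0 = Set.univ ∩
          (⋂ t ∈ Finset.Icc (1 + 0 * m + 1) (1 + 0 * m + m), X t ⁻¹' A)ᶜ := by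
        simp only [hCdef, zero_add]
        rw [Finset.range_one, Finset.set_biInter_singleton, hEkeq 0, Set.univ_inter]
      calc P (Ck 0) = P (Set.univ ∩
            (⋂ t ∈ Finset.Icc (1 + 0 * m + 1) (1 + 0 * m + m), X t ⁻¹' A)ᶜ) := by
            rw [hC0]
        _ ≤ (1 - q ^ m) * P Set.univ := hblock
        _ = r ^ 1 := by rw [hrdef]; simp
    | succ k ih =>
      have hCsucc : Ck (k+1) = Ck k ∩
          (⋂ t ∈ Finset.Icc (1 + (k+1) * m + 1) (1 + (k+1) * m + m), X t ⁻¹' A)ᶜ := by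
        simp only [hCdef]
        rw [Finset.range_add_one, Finset.set_biInter_insert, Set.inter_comm, hEkeq (k+1)]
      have hblock := srrw_block_compl hsrrw hA (1 + (k+1) * m) (by omega) m
        (B := Ck k) (hCmeasF k)
      calc P (Ck (k+1)) = P (Ck k ∩
            (⋂ t ∈ Finset.Icc (1 + (k+1) * m + 1) (1 + (k+1) * m + m), X t ⁻¹' A)ᶜ) := by
            rw [hCsucc]
        _ ≤ (1 - q ^ m) * P (Ck k) := hblock
        _ ≤ r * r ^ (k+1) := by rw [hrdef]; exact mul_le_mul_right ih _
        _ = r ^ (k+2) := by ring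
  -- geometry: on a block event the walk exits
  have hgeom : ∀ (ω : Ω) (j : ℕ), ω ∈ D j →
      R ≤ ‖srrwSum X j ω‖ ∨ R ≤ ‖srrwSum X (j+m) ω‖ := by
    intro ω j hω
    have hsum : ∀ n, (srrwSum X n ω) i = ∑ t ∈ Finset.Icc 1 n, (X t ω) i := by
      intro n
      have h := map_sum (EuclideanSpace.proj (𝕜 := ℝ) i) (fun t => X t ω) (Finset.Icc 1 n)
      simp only [PiLp.proj_apply] at h
      exact h
    have habs1 : ∀ y : ℝ, |e * y| = |y| := by
      rcases he with rfl | rfl <;> intro y <;> simp [abs_mul]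
    have hdiff : e * ((srrwSum X (j+m) ω) i) - e * ((srrwSum X j ω) i)
        = ∑ t ∈ Finset.Ioc j (j+m), e * ((X t ω) i) := by
      rw [hsum, hsum, ← mul_sub]
      have hsplit : ∑ t ∈ Finset.Icc 1 (j+m), (X t ω) i - ∑ t ∈ Finset.Icc 1 j, (X t ω) i
          = ∑ t ∈ Finset.Ioc j (j+m), (X t ω) i := by
        have e1 : Finset.Icc 1 (j+m) = Finset.Ioc 0 (j+m) := Finset.Icc_add_one_left_eq_Ioc 0 (j+m)
        have e2 : Finset.Icc 1 j = Finset.Ioc 0 j := Finset.Icc_add_one_left_eq_Ioc 0 j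
        rw [e1, e2]
        have hcons := Finset.sum_Ioc_consecutive (fun t => (X t ω) i)
          (Nat.zero_le j) (Nat.le_add_right j m)
        linarith [hcons]
      rw [hsplit, Finset.mul_sum]
    have hlow : ∀ t ∈ Finset.Ioc j (j+m), c ≤ e * ((X t ω) i) := by
      intro t ht
      have ht' : t ∈ Finset.Icc (j+1) (j+m) := by
        rw [Finset.Icc_add_one_left_eq_Ioc]; exact ht
      have := Set.mem_iInter₂.1 hω t ht'
      exact this
    have hsumlow : (m : ℝ) * c ≤ ∑ t ∈ Finset.Ioc j (j+m), e * ((X t ω) i) := by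
      have hcard : (Finset.Ioc j (j+m)).card = m := by
        rw [Nat.card_Ioc]; omega
      calc (m : ℝ) * c = (Finset.Ioc j (j+m)).card • c := by
            rw [hcard]; simp [nsmul_eq_mul]
        _ ≤ ∑ t ∈ Finset.Ioc j (j+m), e * ((X t ω) i) :=
            Finset.card_nsmul_le_sum _ _ _ hlow
    have hkey : 2 * R ≤ e * ((srrwSum X (j+m) ω) i) - e * ((srrwSum X j ω) i) := by
      rw [hdiff]; linarith
    rcases le_or_gt R (e * ((srrwSum X (j+m) ω) i)) with hb | hb
    · right
      calc R ≤ e * ((srrwSum X (j+m) ω) i) := hb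
        _ ≤ |e * ((srrwSum X (j+m) ω) i)| := le_abs_self _
        _ = |(srrwSum X (j+m) ω) i| := habs1 _
        _ ≤ ‖srrwSum X (j+m) ω‖ := abs_coord_le_norm _ _
    · left
      have : e * ((srrwSum X j ω) i) ≤ -R := by linarith
      calc R ≤ -(e * ((srrwSum X j ω) i)) := by linarith
        _ ≤ |e * ((srrwSum X j ω) i)| := neg_le_abs _
        _ = |(srrwSum X j ω) i| := habs1 _
        _ ≤ ‖srrwSum X j ω‖ := abs_coord_le_norm _ _
  -- exit time bound on each block event
  have hexit : ∀ (ω : Ω) (k : ℕ), ω ∈ Ek k →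
      ∃ n : ℕ, n ≤ 1 + (k+1) * m ∧ R ≤ ‖srrwSum X n ω‖ := by
    intro ω k hω
    rcases hgeom ω (1 + k * m) hω with h | h
    · exact ⟨1 + k * m, by nlinarith [Nat.zero_le (k * m)], h⟩
    · exact ⟨1 + k * m + m, by nlinarith, h⟩
  -- pointwise bound on the exit time
  have hpt : ∀ ω : Ω, (⨅ (n : ℕ) (_ : R ≤ ‖srrwSum X n ω‖), (n : ℝ≥0∞))
      ≤ ((1 + m : ℕ) : ℝ≥0∞) * (1 + ∑' k, (Ck k).indicator (fun _ => (1 : ℝ≥0∞)) ω) := by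
    intro ω
    by_cases hex : ∃ k, ω ∈ Ek k
    · have hspec := Nat.find_spec hex
      set k0 := Nat.find hex with hk0
      obtain ⟨n, hn, hRn⟩ := hexit ω k0 hspec
      have h1 : (⨅ (n : ℕ) (_ : R ≤ ‖srrwSum X n ω‖), (n : ℝ≥0∞)) ≤ (n : ℝ≥0∞) :=
        iInf_le_of_le n (iInf_le _ hRn)
      have h2 : ∀ k < k0, ω ∈ Ck k := by
        intro k hk
        refine Set.mem_iInter₂.2 fun j hj => ?_
        rw [Finset.mem_range] at hj
        exact Nat.find_min hex (by omega)
      have h3 : (k0 : ℝ≥0∞) ≤ ∑' k, (Ck k).indicator (fun _ => (1 : ℝ≥0∞)) ω := by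
        calc (k0 : ℝ≥0∞) = ∑ k ∈ Finset.range k0, 1 := by simp
          _ ≤ ∑ k ∈ Finset.range k0, (Ck k).indicator (fun _ => (1 : ℝ≥0∞)) ω := by
              refine Finset.sum_le_sum fun k hk => ?_
              rw [Set.indicator_of_mem (h2 k (Finset.mem_range.mp hk))]
          _ ≤ ∑' k, (Ck k).indicator (fun _ => (1 : ℝ≥0∞)) ω := ENNReal.sum_le_tsum _
      calc (⨅ (n : ℕ) (_ : R ≤ ‖srrwSum X n ω‖), (n : ℝ≥0∞)) ≤ (n : ℝ≥0∞) := h1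
        _ ≤ ((1 + (k0+1) * m : ℕ) : ℝ≥0∞) := Nat.cast_le.2 hn
        _ ≤ ((1 + m : ℕ) : ℝ≥0∞) * ((1 + k0 : ℕ) : ℝ≥0∞) := by
            rw [← Nat.cast_mul]
            exact Nat.cast_le.2 (by nlinarith)
        _ = ((1 + m : ℕ) : ℝ≥0∞) * (1 + (k0 : ℝ≥0∞)) := by push_cast; ring
        _ ≤ ((1 + m : ℕ) : ℝ≥0∞) * (1 + ∑' k, (Ck k).indicator (fun _ => (1 : ℝ≥0∞)) ω) :=
            mul_le_mul_right (add_le_add_right h3 1) _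
    · have hall : ∀ k, ω ∈ Ck k := by
        intro k
        refine Set.mem_iInter₂.2 fun j _ => fun hj => hex ⟨j, hj⟩
      have htop : ∑' k, (Ck k).indicator (fun _ => (1 : ℝ≥0∞)) ω = ⊤ := by
        rw [tsum_congr (fun k => Set.indicator_of_mem (hall k) _)]
        exact ENNReal.tsum_const_eq_top_of_ne_zero one_ne_zero
      rw [htop]
      have : ((1 + m : ℕ) : ℝ≥0∞) * (1 + ⊤) = ⊤ := by simp
      rw [this]
      exact le_top
  -- integrate
  have hint : ∫⁻ ω, (⨅ (n : ℕ) (_ : R ≤ ‖srrwSum X n ω‖), (n : ℝ≥0∞)) ∂P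
      ≤ ((1 + m : ℕ) : ℝ≥0∞) * (1 + ∑' k, P (Ck k)) := by
    calc ∫⁻ ω, (⨅ (n : ℕ) (_ : R ≤ ‖srrwSum X n ω‖), (n : ℝ≥0∞)) ∂P
        ≤ ∫⁻ ω, ((1 + m : ℕ) : ℝ≥0∞) * (1 + ∑' k, (Ck k).indicator (fun _ => (1 : ℝ≥0∞)) ω) ∂P :=
          lintegral_mono hpt
      _ = ((1 + m : ℕ) : ℝ≥0∞) *
          ∫⁻ ω, (1 + ∑' k, (Ck k).indicator (fun _ => (1 : ℝ≥0∞)) ω) ∂P :=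
          lintegral_const_mul' _ _ (ENNReal.natCast_ne_top _)
      _ = ((1 + m : ℕ) : ℝ≥0∞) * (1 + ∑' k, P (Ck k)) := by
          congr 1
          rw [lintegral_add_left measurable_const, lintegral_tsum fun k =>
              ((measurable_const.indicator (hCmeas k)).aemeasurable)]
          have h1 : ∫⁻ _, (1:ℝ≥0∞) ∂P = 1 := by simp
          rw [h1]
          congr 1
          refine tsum_congr fun k => ?_
          rw [lintegral_indicator_const (hCmeas k), one_mul]
  refine lt_of_le_of_lt hint ?_
  have hqm0 : 0 < q ^ m := ENNReal.pow_pos hq0 m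
  have hqm1 : q ^ m ≤ 1 := pow_le_one' hq1 m
  have hsub : (1 : ℝ≥0∞) - r = q ^ m := by
    rw [hrdef]
    exact ENNReal.sub_sub_cancel ENNReal.one_ne_top hqm1
  have htsum : ∑' k, P (Ck k) ≤ r * (q ^ m)⁻¹ := by
    calc ∑' k, P (Ck k) ≤ ∑' k, r ^ (k+1) := ENNReal.tsum_le_tsum hPk
      _ = r * (1 - r)⁻¹ := ENNReal.tsum_geometric_add_one r
      _ = r * (q ^ m)⁻¹ := by rw [hsub]
  have hfin : r * (q ^ m)⁻¹ < ⊤ := by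
    refine ENNReal.mul_lt_top ?_ ?_
    · exact lt_of_le_of_lt (tsub_le_self) ENNReal.one_lt_top
    · exact ENNReal.inv_lt_top.2 hqm0
  refine ENNReal.mul_lt_top (ENNReal.natCast_lt_top _) ?_
  exact lt_of_le_of_lt (add_le_add_right htsum 1)
    (lt_of_lt_of_le (ENNReal.add_lt_top.2 ⟨ENNReal.one_lt_top, hfin⟩) le_rfl)

end
end

section
/- Let S be a step-reinforced random walk in ℝ^d with parameter α ∈ [0,1) and step distribution μ satisfying E‖X₁‖² < ∞ and EX₁ = 0. Then the process Mₙ = ‖Sₙ‖² − n(1−α)E‖X₁‖² (with M₀ = 0) is a submartingale with respect to the natural filtration. -/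
open MeasureTheory ProbabilityTheory Filter
open scoped ENNReal Topology

noncomputable section

section Aux
open Finset

variable {Ω : Type*} [mΩ : MeasurableSpace Ω] {d : ℕ}
  {P : Measure Ω} {α : ℝ} {μ : Measure (EuclideanSpace ℝ (Fin d))}
  {X : ℕ → Ω → EuclideanSpace ℝ (Fin d)}

lemma srrw_hle (h : IsSRRW P α μ X) (n : ℕ) : srrwFiltration X n ≤ mΩ :=
  iSup₂_le fun i _ => measurable_iff_comap_le.mp (h.meas i)

lemma srrw_key (h : IsSRRW P α μ X) {n : ℕ} (hn : 1 ≤ n) {B : Set Ω}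
    (hB : MeasurableSet[srrwFiltration X n] B) :
    (P.restrict B).map (X (n+1)) =
      ENNReal.ofReal (α / n) • (∑ i ∈ Finset.Icc 1 n, (P.restrict B).map (X i))
      + (ENNReal.ofReal (1 - α) * P B) • μ := by
  haveI := h.probP; haveI := h.probμ
  have hle := srrw_hle h n
  have hBm : MeasurableSet B := hle _ hB
  ext A hA
  have hind : ∀ i, (fun ω => A.indicator (fun _ => (1:ℝ)) (X i ω))
      = (X i ⁻¹' A).indicator (fun _ => (1:ℝ)) := by
    intro i; ext ω; by_cases hω : X i ω ∈ A <;> simp [hω]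
  have hint : ∀ i, Integrable (fun ω => A.indicator (fun _ => (1:ℝ)) (X i ω)) P := by
    intro i; rw [hind i]; exact (integrable_const 1).indicator ((h.meas i) hA)
  have hsi : ∀ i, ∫ ω in B, A.indicator (fun _ => (1:ℝ)) (X i ω) ∂P
      = (P (X i ⁻¹' A ∩ B)).toReal := by
    intro i
    rw [hind i, setIntegral_indicator ((h.meas i) hA), setIntegral_const, Set.inter_comm,
      smul_eq_mul, mul_one]
    rfl
  have e1 : (P (X (n+1) ⁻¹' A ∩ B)).toReal
      = (α / n) * ∑ i ∈ Finset.Icc 1 n, (P (X i ⁻¹' A ∩ B)).toReal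
        + (1 - α) * (μ A).toReal * (P B).toReal := by
    rw [← hsi (n+1), ← setIntegral_condExp hle (hint (n+1)) hB,
      setIntegral_congr_ae hBm ((h.cond n hn A hA).mono fun ω hω _ => hω)]
    have hintB : Integrable (fun ω => (α / n) *
        ∑ i ∈ Finset.Icc 1 n, A.indicator (fun _ => (1:ℝ)) (X i ω)) (P.restrict B) := by
      exact (Integrable.const_mul (integrable_finset_sum _
        fun i _ => (hint i).restrict) _)
    rw [integral_add hintB (integrable_const _), integral_const_mul _ _,
      integral_finset_sum _ fun i _ => (hint i).restrict, setIntegral_const]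
    simp only [hsi, smul_eq_mul, measureReal_def]
    ring
  have hne : ∀ (s : Set Ω), P s ≠ ∞ := fun s => measure_ne_top P s
  have hα0 : 0 ≤ α / n := div_nonneg h.alpha_nonneg (Nat.cast_nonneg n)
  have hα1 : 0 ≤ 1 - α := sub_nonneg.mpr h.alpha_lt_one.le
  rw [Measure.map_apply (h.meas (n+1)) hA, Measure.restrict_apply ((h.meas (n+1)) hA)]
  rw [Measure.add_apply, Measure.smul_apply, Measure.smul_apply,
    Measure.finset_sum_apply]
  simp only [Measure.map_apply (h.meas _) hA, Measure.restrict_apply ((h.meas _) hA)]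
  have hRfin : ENNReal.ofReal (α / n) * ∑ i ∈ Finset.Icc 1 n, P (X i ⁻¹' A ∩ B) ≠ ∞ := by
    refine ENNReal.mul_ne_top ENNReal.ofReal_ne_top ?_
    exact (ENNReal.sum_lt_top.mpr fun i _ => (measure_lt_top P _)).ne
  have hRfin2 : ENNReal.ofReal (1 - α) * P B * μ A ≠ ∞ :=
    ENNReal.mul_ne_top (ENNReal.mul_ne_top ENNReal.ofReal_ne_top (hne B)) (measure_ne_top μ A)
  rw [smul_eq_mul, smul_eq_mul]
  refine (ENNReal.toReal_eq_toReal_iff' (hne _) (by exact ENNReal.add_ne_top.mpr ⟨hRfin, hRfin2⟩)).mp ?_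
  rw [ENNReal.toReal_add hRfin hRfin2, ENNReal.toReal_mul, ENNReal.toReal_mul,
    ENNReal.toReal_mul, ENNReal.toReal_ofReal hα0, ENNReal.toReal_ofReal hα1,
    ENNReal.toReal_sum (fun i _ => hne _)]
  rw [e1]; ring

lemma srrw_measX {n i : ℕ} (hi : i ∈ Finset.Icc 1 n) :
    Measurable[srrwFiltration X n] (X i) :=
  measurable_iff_comap_le.mpr (le_iSup₂ (f := fun i (_ : i ∈ Finset.Icc 1 n) =>
    MeasurableSpace.comap (X i) inferInstance) i hi)

lemma srrw_law_s14 (h : IsSRRW P α μ X) : ∀ n, ∀ i ∈ Finset.Icc 1 n, P.map (X i) = μ := by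
  intro n
  induction n with
  | zero => intro i hi; simp at hi
  | succ n ih =>
    intro i hi
    simp only [Finset.mem_Icc] at hi
    rcases Nat.lt_or_ge i (n+1) with hlt | hge
    · exact ih i (Finset.mem_Icc.mpr ⟨hi.1, by omega⟩)
    have hieq : i = n + 1 := by omega
    subst hieq
    rcases Nat.eq_zero_or_pos n with hn0 | hn
    · subst hn0; exact h.law_one
    haveI := h.probP
    have key := srrw_key h hn (B := Set.univ) MeasurableSet.univ
    rw [Measure.restrict_univ] at key
    rw [key]
    have hmaps : ∀ j ∈ Finset.Icc 1 n, P.map (X j) = μ := ih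
    rw [Finset.sum_congr rfl hmaps, Finset.sum_const, Nat.card_Icc]
    simp only [measure_univ, mul_one, Nat.add_sub_cancel]
    rw [← Nat.cast_smul_eq_nsmul ℝ≥0∞ n μ, smul_smul, ← add_smul]
    have hc : ENNReal.ofReal (α / ↑n) * (n : ℝ≥0∞) + ENNReal.ofReal (1 - α) = 1 := by
      have hn' : (n : ℝ) ≠ 0 := Nat.cast_ne_zero.mpr hn.ne'
      rw [← ENNReal.ofReal_natCast, ← ENNReal.ofReal_mul
        (div_nonneg h.alpha_nonneg (Nat.cast_nonneg n)),
        div_mul_cancel₀ _ hn',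
        ← ENNReal.ofReal_add h.alpha_nonneg (sub_nonneg.mpr h.alpha_lt_one.le)]
      simp
    rw [hc, one_smul]

lemma srrw_int_comp {F : Type*} [NormedAddCommGroup F] (h : IsSRRW P α μ X)
    {f : EuclideanSpace ℝ (Fin d) → F} (hfm : StronglyMeasurable f) (hfi : Integrable f μ)
    {i : ℕ} (hi : 1 ≤ i) : Integrable (fun ω => f (X i ω)) P := by
  have hmap := srrw_law_s14 h i i (Finset.mem_Icc.mpr ⟨hi, le_rfl⟩)
  exact (integrable_map_measure (by rw [hmap]; exact hfi.aestronglyMeasurable)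
    (h.meas i).aemeasurable).mp (by rw [hmap]; exact hfi)

lemma srrw_setint (h : IsSRRW P α μ X) {n : ℕ} (hn : 1 ≤ n) {B : Set Ω}
    (hB : MeasurableSet[srrwFiltration X n] B)
    {f : EuclideanSpace ℝ (Fin d) → ℝ} (hfm : StronglyMeasurable f) (hfi : Integrable f μ) :
    ∫ ω in B, f (X (n+1) ω) ∂P = (α / n) * ∑ i ∈ Finset.Icc 1 n, ∫ ω in B, f (X i ω) ∂P
      + (1 - α) * (P B).toReal * ∫ x, f x ∂μ := by
  haveI := h.probP
  rw [← integral_map (h.meas (n+1)).aemeasurable hfm.aestronglyMeasurable,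
    srrw_key h hn hB]
  have hIi : ∀ i ∈ Finset.Icc 1 n, Integrable f ((P.restrict B).map (X i)) := by
    intro i hi
    refine hfi.mono_measure ?_
    rw [← srrw_law_s14 h n i hi]
    exact Measure.map_mono Measure.restrict_le_self (h.meas i)
  have hI1 : Integrable f (ENNReal.ofReal (α / n) •
      (∑ i ∈ Finset.Icc 1 n, (P.restrict B).map (X i))) :=
    (integrable_finset_sum_measure.mpr hIi).smul_measure ENNReal.ofReal_ne_top
  have hI2 : Integrable f ((ENNReal.ofReal (1 - α) * P B) • μ) :=
    hfi.smul_measure (ENNReal.mul_ne_top ENNReal.ofReal_ne_top (measure_ne_top P B))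
  rw [integral_add_measure hI1 hI2, integral_smul_measure, integral_smul_measure,
    integral_finset_sum_measure hIi]
  have hmi : ∀ i ∈ Finset.Icc 1 n, ∫ x, f x ∂((P.restrict B).map (X i))
      = ∫ ω in B, f (X i ω) ∂P := fun i _ =>
    integral_map (h.meas i).aemeasurable hfm.aestronglyMeasurable
  rw [Finset.sum_congr rfl hmi, ENNReal.toReal_ofReal
    (div_nonneg h.alpha_nonneg (Nat.cast_nonneg n)), ENNReal.toReal_mul,
    ENNReal.toReal_ofReal (sub_nonneg.mpr h.alpha_lt_one.le)]
  simp only [smul_eq_mul]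
  try ring

lemma srrw_condexp (h : IsSRRW P α μ X) {n : ℕ} (hn : 1 ≤ n)
    {f : EuclideanSpace ℝ (Fin d) → ℝ} (hfm : StronglyMeasurable f) (hfi : Integrable f μ) :
    P[fun ω => f (X (n+1) ω) | srrwFiltration X n] =ᵐ[P]
      fun ω => (α / n) * ∑ i ∈ Finset.Icc 1 n, f (X i ω) + (1 - α) * ∫ x, f x ∂μ := by
  haveI := h.probP
  have hle := srrw_hle h n
  have hgint : Integrable (fun ω => (α / n) * ∑ i ∈ Finset.Icc 1 n, f (X i ω)
      + (1 - α) * ∫ x, f x ∂μ) P := by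
    refine Integrable.add ?_ (integrable_const _)
    exact (integrable_finset_sum _ fun i hi =>
      srrw_int_comp h hfm hfi (Finset.mem_Icc.mp hi).1).const_mul _
  refine (ae_eq_condExp_of_forall_setIntegral_eq hle
    (srrw_int_comp h hfm hfi (by omega)) (fun s hs _ => hgint.integrableOn)
    (fun s hs _ => ?_) ?_).symm
  · rw [srrw_setint h hn hs hfm hfi,
      integral_add ((integrable_finset_sum _ fun i hi =>
        srrw_int_comp h hfm hfi (Finset.mem_Icc.mp hi).1).const_mul _).restrict
        (integrable_const _), integral_const_mul _ _,
      integral_finset_sum _ (fun i hi =>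
        (srrw_int_comp h hfm hfi (Finset.mem_Icc.mp hi).1).restrict), setIntegral_const]
    simp only [smul_eq_mul, measureReal_def]
    try ring
  · refine StronglyMeasurable.aestronglyMeasurable ?_
    refine StronglyMeasurable.add_const ?_ _
    refine StronglyMeasurable.const_mul ?_ _
    refine Finset.stronglyMeasurable_fun_sum _ fun i hi => ?_
    exact (hfm.measurable.comp (srrw_measX hi)).stronglyMeasurable

lemma srrw_measSum (n : ℕ) : Measurable[srrwFiltration X n] (srrwSum X n) := by
  unfold srrwSum
  exact Finset.measurable_sum _ fun i hi => srrw_measX hi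

lemma euclid_norm_sq (v : EuclideanSpace ℝ (Fin d)) : ‖v‖^2 = ∑ k, (v k)^2 := by
  rw [EuclideanSpace.norm_eq, Real.sq_sqrt (Finset.sum_nonneg fun i _ => by positivity)]
  simp [Real.norm_eq_abs, sq_abs]

lemma euclid_inner (a b : EuclideanSpace ℝ (Fin d)) : (inner ℝ a b : ℝ) = ∑ k, a k * b k := by
  simp [PiLp.inner_apply, RCLike.inner_apply, mul_comm]

lemma srrwSum_apply (n : ℕ) (ω : Ω) (k : Fin d) :
    srrwSum X n ω k = ∑ i ∈ Finset.Icc 1 n, X i ω k := by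
  unfold srrwSum
  induction n with
  | zero => simp
  | succ n ih =>
    rw [Finset.sum_Icc_succ_top (by omega), Finset.sum_Icc_succ_top (by omega), ← ih]; rfl


end Aux

theorem stmt14 {Ω : Type*} [MeasurableSpace Ω] {d : ℕ}
    (P : Measure Ω) (α : ℝ) (μ : Measure (EuclideanSpace ℝ (Fin d)))
    (X : ℕ → Ω → EuclideanSpace ℝ (Fin d))
    (hsrrw : IsSRRW P α μ X)
    (hmom : Integrable (fun x => ‖x‖ ^ 2) μ)
    (hmean : ∫ x, x ∂μ = 0)
    (M : ℕ → Ω → ℝ)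
    (hM : ∀ n ω, M n ω = ‖srrwSum X n ω‖ ^ 2 - n * (1 - α) * ∫ x, ‖x‖ ^ 2 ∂μ) :
    (∀ n, Integrable (M n) P)
    ∧ (∀ n, StronglyMeasurable[srrwFiltration X n] (M n))
    ∧ (∀ n, M n ≤ᵐ[P] P[M (n+1) | srrwFiltration X n]) := by
  haveI := hsrrw.probP
  haveI := hsrrw.probμ
  set c := ∫ x, ‖x‖ ^ 2 ∂μ with hcdef
  have hc0 : 0 ≤ c := integral_nonneg fun x => by positivity
  have hnsqm : StronglyMeasurable (fun x : EuclideanSpace ℝ (Fin d) => ‖x‖ ^ 2) :=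
    (continuous_norm.pow 2).stronglyMeasurable
  have hidμ : Integrable (fun x : EuclideanSpace ℝ (Fin d) => x) μ := by
    refine (hmom.add (integrable_const 1)).mono aestronglyMeasurable_id
      (Eventually.of_forall fun x => ?_)
    have h0 : (0:ℝ) ≤ ‖x‖ := norm_nonneg x
    have h1 : ‖x‖ ≤ ‖x‖ ^ 2 + 1 := by nlinarith [sq_nonneg (‖x‖ - 1)]
    calc ‖x‖ ≤ ‖x‖ ^ 2 + 1 := h1
      _ ≤ |‖x‖ ^ 2 + 1| := le_abs_self _
      _ = ‖‖x‖ ^ 2 + 1‖ := (Real.norm_eq_abs _).symm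
  have hcoordm : ∀ k : Fin d, Measurable (fun v : EuclideanSpace ℝ (Fin d) => v k) :=
    fun k => (EuclideanSpace.proj (𝕜 := ℝ) k).continuous.measurable
  have hcoord_int : ∀ k : Fin d, Integrable (fun x : EuclideanSpace ℝ (Fin d) => x k) μ :=
    fun k => (EuclideanSpace.proj (𝕜 := ℝ) k).integrable_comp hidμ
  have hmean_k : ∀ k : Fin d, ∫ x, x k ∂μ = 0 := by
    intro k
    have h := (EuclideanSpace.proj (𝕜 := ℝ) k).integral_comp_comm hidμ
    rw [hmean] at h
    simpa using h
  have hXint : ∀ i, 1 ≤ i → Integrable (fun ω => ‖X i ω‖ ^ 2) P :=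
    fun i hi => srrw_int_comp hsrrw hnsqm hmom hi
  have hXkint : ∀ i, 1 ≤ i → ∀ k, Integrable (fun ω => X i ω k) P :=
    fun i hi k => srrw_int_comp hsrrw (hcoordm k).stronglyMeasurable (hcoord_int k) hi
  have hmeasS : ∀ n, Measurable (srrwSum X n) :=
    fun n => (srrw_measSum n).mono (srrw_hle hsrrw n) le_rfl
  have hSsq : ∀ n, Integrable (fun ω => ‖srrwSum X n ω‖ ^ 2) P := by
    intro n
    refine Integrable.mono
      (g := fun ω => (n : ℝ) * ∑ i ∈ Finset.Icc 1 n, ‖X i ω‖ ^ 2)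
      ((integrable_finset_sum _ fun i hi =>
        hXint i (Finset.mem_Icc.mp hi).1).const_mul _)
      ((hmeasS n).norm.pow_const 2).aestronglyMeasurable
      (Eventually.of_forall fun ω => ?_)
    have h1 : ‖srrwSum X n ω‖ ≤ ∑ i ∈ Finset.Icc 1 n, ‖X i ω‖ :=
      norm_sum_le _ _
    have h2 : ‖srrwSum X n ω‖ ^ 2 ≤ (∑ i ∈ Finset.Icc 1 n, ‖X i ω‖) ^ 2 := by
      exact pow_le_pow_left₀ (norm_nonneg _) h1 2
    have h3 : (∑ i ∈ Finset.Icc 1 n, ‖X i ω‖) ^ 2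
        ≤ (Finset.Icc 1 n).card * ∑ i ∈ Finset.Icc 1 n, ‖X i ω‖ ^ 2 :=
      sq_sum_le_card_mul_sum_sq
    have hcard : ((Finset.Icc 1 n).card : ℝ) = n := by
      rw [Nat.card_Icc]; push_cast; ring
    have h4 : 0 ≤ (n:ℝ) * ∑ i ∈ Finset.Icc 1 n, ‖X i ω‖ ^ 2 := by positivity
    rw [Real.norm_eq_abs, Real.norm_eq_abs, abs_of_nonneg (by positivity),
      abs_of_nonneg h4]
    calc ‖srrwSum X n ω‖ ^ 2 ≤ _ := h2
      _ ≤ _ := h3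
      _ = (n:ℝ) * ∑ i ∈ Finset.Icc 1 n, ‖X i ω‖ ^ 2 := by rw [hcard]
  have hMfun : ∀ n, M n = fun ω => ‖srrwSum X n ω‖ ^ 2 - n * (1 - α) * c :=
    fun n => funext (hM n)
  have part1 : ∀ n, Integrable (M n) P := by
    intro n; rw [hMfun n]; exact (hSsq n).sub (integrable_const _)
  have part2 : ∀ n, StronglyMeasurable[srrwFiltration X n] (M n) := by
    intro n; rw [hMfun n]
    have h1 : StronglyMeasurable[srrwFiltration X n]
        (fun ω => ‖srrwSum X n ω‖ ^ 2) :=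
      (continuous_norm.pow 2).comp_stronglyMeasurable (srrw_measSum n).stronglyMeasurable
    exact h1.sub stronglyMeasurable_const
  refine ⟨part1, part2, fun n => ?_⟩
  rcases Nat.eq_zero_or_pos n with rfl | hn
  · -- n = 0
    have h0 : srrwFiltration X 0 = ⊥ := by
      unfold srrwFiltration
      simp
    rw [h0, condExp_bot]
    have hint1 : ∫ ω, M 1 ω ∂P = c - (1 - α) * c := by
      have hS1 : ∀ ω, srrwSum X 1 ω = X 1 ω := by
        intro ω; unfold srrwSum; simp
      have hI : ∫ ω, ‖X 1 ω‖ ^ 2 ∂P = c := by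
        rw [hcdef, ← hsrrw.law_one,
          integral_map (hsrrw.meas 1).aemeasurable hnsqm.aestronglyMeasurable]
      rw [hMfun 1]
      rw [integral_sub (by simpa [hS1] using hXint 1 le_rfl) (integrable_const _)]
      simp only [hS1]
      rw [hI, integral_const, probReal_univ]
      simp only [ENNReal.toReal_one, one_smul]
      push_cast
      ring
    refine Eventually.of_forall fun ω => ?_
    rw [hM 0 ω]
    have hS0 : srrwSum X 0 ω = 0 := by unfold srrwSum; simp
    rw [hS0, hint1]
    simp only [norm_zero, Nat.cast_zero]
    nlinarith [hsrrw.alpha_nonneg, hc0]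
  · -- n ≥ 1
    have hle := srrw_hle hsrrw n
    have hα : 0 ≤ α / n := div_nonneg hsrrw.alpha_nonneg (Nat.cast_nonneg n)
    set F1 : Ω → ℝ := fun ω => ‖srrwSum X n ω‖ ^ 2 - ((n:ℝ)+1) * (1 - α) * c with hF1
    set F2 : Ω → ℝ := ∑ k : Fin d,
      (fun ω => 2 * srrwSum X n ω k) * (fun ω => X (n+1) ω k) with hF2
    set F3 : Ω → ℝ := fun ω => ‖X (n+1) ω‖ ^ 2 with hF3
    have hdec : M (n+1) = (F1 + F2) + F3 := by
      funext ω
      simp only [hF1, hF2, hF3, Pi.add_apply, Finset.sum_apply, Pi.mul_apply]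
      rw [hM]
      have hS : srrwSum X (n+1) ω = srrwSum X n ω + X (n+1) ω := by
        unfold srrwSum; rw [Finset.sum_Icc_succ_top (by omega)]
      rw [hS, norm_add_sq_real, euclid_inner]
      have hsum : ∑ k : Fin d, 2 * srrwSum X n ω k * X (n+1) ω k
          = 2 * ∑ k : Fin d, srrwSum X n ω k * X (n+1) ω k := by
        rw [Finset.mul_sum]
        exact Finset.sum_congr rfl fun k _ => by ring
      rw [hsum]
      push_cast
      ring
    have hSk : ∀ k, Measurable[srrwFiltration X n] (fun ω => srrwSum X n ω k) :=
      fun k => (hcoordm k).comp (srrw_measSum n)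
    have iF1 : Integrable F1 P := (hSsq n).sub (integrable_const _)
    have ifk : ∀ k : Fin d, Integrable
        ((fun ω => 2 * srrwSum X n ω k) * (fun ω => X (n+1) ω k)) P := by
      intro k
      refine ((hSsq n).add (hXint (n+1) (by omega))).mono ?_
        (Eventually.of_forall fun ω => ?_)
      · exact ((((hSk k).mono hle le_rfl).const_mul 2).mul
          ((hcoordm k).comp (hsrrw.meas (n+1)))).aestronglyMeasurable
      · simp only [Pi.mul_apply, Pi.add_apply]
        set a := srrwSum X n ω k with hadef
        set b := X (n+1) ω k with hbdef
        have ha : a ^ 2 ≤ ‖srrwSum X n ω‖ ^ 2 := by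
          rw [euclid_norm_sq]
          exact Finset.single_le_sum (f := fun i => (srrwSum X n ω i) ^ 2)
            (fun i _ => sq_nonneg _) (Finset.mem_univ k)
        have hb : b ^ 2 ≤ ‖X (n+1) ω‖ ^ 2 := by
          rw [euclid_norm_sq]
          exact Finset.single_le_sum (f := fun i => (X (n+1) ω i) ^ 2)
            (fun i _ => sq_nonneg _) (Finset.mem_univ k)
        have hnonneg : (0:ℝ) ≤ ‖srrwSum X n ω‖ ^ 2 + ‖X (n+1) ω‖ ^ 2 := by positivity
        rw [Real.norm_eq_abs, Real.norm_eq_abs, abs_of_nonneg hnonneg]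
        have habs : |2 * a * b| ≤ a ^ 2 + b ^ 2 := by
          rw [abs_mul, abs_mul, abs_two, ← sq_abs a, ← sq_abs b]
          exact two_mul_le_add_sq |a| |b|
        calc |2 * a * b| ≤ a ^ 2 + b ^ 2 := habs
          _ ≤ _ := add_le_add ha hb
    have iF2 : Integrable F2 P := integrable_finset_sum' _ fun k _ => ifk k
    have iF3 : Integrable F3 P := hXint (n+1) (by omega)
    have hF1sm : StronglyMeasurable[srrwFiltration X n] F1 := by
      have h1 : StronglyMeasurable[srrwFiltration X n]
          (fun ω => ‖srrwSum X n ω‖ ^ 2) :=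
        (continuous_norm.pow 2).comp_stronglyMeasurable (srrw_measSum n).stronglyMeasurable
      exact h1.sub stronglyMeasurable_const
    have ceF1 : P[F1 | srrwFiltration X n] =ᵐ[P] F1 := by
      rw [condExp_of_stronglyMeasurable hle hF1sm iF1]
    have ceF3 : P[F3 | srrwFiltration X n] =ᵐ[P]
        fun ω => (α / n) * ∑ i ∈ Finset.Icc 1 n, ‖X i ω‖ ^ 2 + (1 - α) * c :=
      srrw_condexp hsrrw hn hnsqm hmom
    have cek : ∀ k : Fin d,
        P[(fun ω => 2 * srrwSum X n ω k) * (fun ω => X (n+1) ω k) | srrwFiltration X n]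
          =ᵐ[P] fun ω => 2 * srrwSum X n ω k * ((α / n) * srrwSum X n ω k) := by
      intro k
      have h1 := condExp_mul_of_stronglyMeasurable_left (m := srrwFiltration X n)
        (((hSk k).stronglyMeasurable).const_mul 2) (ifk k) (hXkint (n+1) (by omega) k)
      have h2 := srrw_condexp hsrrw hn (hcoordm k).stronglyMeasurable (hcoord_int k)
      rw [hmean_k k] at h2
      refine h1.trans ?_
      refine (EventuallyEq.mul (EventuallyEq.refl _ _) h2).trans ?_
      refine Eventually.of_forall fun ω => ?_
      simp only [Pi.mul_apply]
      rw [srrwSum_apply]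
      ring
    have ceF2 : P[F2 | srrwFiltration X n] =ᵐ[P]
        fun ω => ∑ k : Fin d, 2 * srrwSum X n ω k * ((α / n) * srrwSum X n ω k) := by
      refine (condExp_finsetSum (fun k _ => ifk k) _).trans ?_
      refine (eventuallyEq_sum fun k _ => cek k).trans ?_
      refine Eventually.of_forall fun ω => ?_
      simp [Finset.sum_apply]
    have hce : P[M (n+1) | srrwFiltration X n] =ᵐ[P]
        fun ω => F1 ω + (∑ k : Fin d, 2 * srrwSum X n ω k * ((α / n) * srrwSum X n ω k))
          + ((α / n) * ∑ i ∈ Finset.Icc 1 n, ‖X i ω‖ ^ 2 + (1 - α) * c) := by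
      rw [hdec]
      refine (condExp_add (iF1.add iF2) iF3 _).trans ?_
      refine (EventuallyEq.add (condExp_add iF1 iF2 _) (EventuallyEq.refl _ _)).trans ?_
      refine (EventuallyEq.add (EventuallyEq.add ceF1 ceF2) ceF3).trans ?_
      refine Eventually.of_forall fun ω => ?_
      simp [Pi.add_apply]
    filter_upwards [hce] with ω hω
    rw [hω, hM n ω]
    have t1 : 0 ≤ ∑ k : Fin d, 2 * srrwSum X n ω k * ((α / n) * srrwSum X n ω k) :=
      Finset.sum_nonneg fun k _ => by nlinarith [sq_nonneg (srrwSum X n ω k), hα]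
    have t2 : 0 ≤ (α / n) * ∑ i ∈ Finset.Icc 1 n, ‖X i ω‖ ^ 2 :=
      mul_nonneg hα (Finset.sum_nonneg fun i _ => by positivity)
    simp only [hF1]
    push_cast
    linarith


end
end
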